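/- Let B ∈ ℝ^{M×N}. If BᵀB is the diagonal matrix diag(α₁², …, α_N²) for real numbers α₁, …, α_N, then the generalized Huber function is separable: S_B(x) = ∑_{n=1}^N s_{α_n}(x_n) for all x ∈ ℝ^N. -/
import Mathlib


open Matrix

/-- The ℓ₁ norm on `ℝ^N`. -/
noncomputable def norm1 {N : ℕ} (v : Fin N → ℝ) : ℝ := ∑ n, |v n|

/-- The squared Euclidean (ℓ₂) norm on `ℝ^M`. -/
def norm2sq {M : ℕ} (u : Fin M → ℝ) : ℝ := ∑ m, (u m) ^ 2

/-- The generalized Huber function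
`S_B(x) = inf_v ( ‖v‖₁ + (1/2) ‖B(x - v)‖₂² )`. -/
noncomputable def genHuber {M N : ℕ} (B : Matrix (Fin M) (Fin N) ℝ) (x : Fin N → ℝ) : ℝ :=
  ⨅ v : Fin N → ℝ, (norm1 v + (1 / 2) * norm2sq (B.mulVec (x - v)))

/-- The generalized MC (GMC) penalty `ψ_B(x) = ‖x‖₁ - S_B(x)`. -/
noncomputable def gmcPenalty {M N : ℕ} (B : Matrix (Fin M) (Fin N) ℝ) (x : Fin N → ℝ) : ℝ :=
  norm1 x - genHuber B x

/-- The Huber function: `s(x) = x²/2` for `|x| ≤ 1` and `s(x) = |x| - 1/2` for `|x| ≥ 1`. -/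
noncomputable def huber (x : ℝ) : ℝ :=
  if |x| ≤ 1 then x ^ 2 / 2 else |x| - 1 / 2

/-- The scaled Huber function: `s_b(x) = s(b² x)/b²` for `b ≠ 0`, and `s_0 = 0`. -/
noncomputable def scaledHuber (b x : ℝ) : ℝ :=
  if b = 0 then 0 else huber (b ^ 2 * x) / b ^ 2

lemma scalar_lb (b x t : ℝ) : scaledHuber b x ≤ |t| + (1/2) * b^2 * (x - t)^2 := by
  unfold scaledHuber huber
  by_cases hb : b = 0
  · simp [hb]
  · rw [if_neg hb]
    have hc : (0:ℝ) < b^2 := by positivity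
    by_cases h : |b^2 * x| ≤ 1
    · rw [if_pos h]
      rw [abs_mul, abs_of_pos hc] at h
      rw [div_le_iff₀ hc]
      have h1 : t * x ≤ |t| * |x| := by rw [← abs_mul]; exact le_abs_self _
      nlinarith [mul_nonneg (mul_nonneg hc.le (abs_nonneg t)) (sub_nonneg.2 h),
        mul_le_mul_of_nonneg_left h1 (mul_nonneg hc.le hc.le),
        mul_nonneg (mul_nonneg hc.le hc.le) (sq_nonneg t)]
    · rw [if_neg h]
      push_neg at h
      rw [abs_mul, abs_of_pos hc] at h
      rw [div_le_iff₀ hc]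
      have habs : |x| ≤ |t| + |x - t| := by
        calc |x| = |t + (x - t)| := by ring_nf
        _ ≤ |t| + |x - t| := abs_add_le _ _
      have h2 : b^2 * |x - t| ≤ (b^2)^2 * (x-t)^2 / 2 + 1/2 := by
        nlinarith [sq_nonneg (b^2 * |x - t| - 1), sq_abs (x - t)]
      have h3 := mul_le_mul_of_nonneg_left habs hc.le
      rw [abs_mul, abs_of_pos hc]
      nlinarith [abs_nonneg t]

lemma scalar_attain (b x : ℝ) :
    ∃ t : ℝ, |t| + (1/2) * b^2 * (x - t)^2 = scaledHuber b x := by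
  unfold scaledHuber huber
  by_cases hb : b = 0
  · exact ⟨0, by simp [hb]⟩
  · rw [if_neg hb]
    have hc : (0:ℝ) < b^2 := by positivity
    by_cases h : |b^2 * x| ≤ 1
    · refine ⟨0, ?_⟩
      rw [if_pos h]
      field_simp
      ring
    · rw [if_neg h]
      push_neg at h
      rw [abs_mul, abs_of_pos hc] at h
      have hx : x ≠ 0 := by rintro rfl; simp at h; linarith
      rcases hx.lt_or_gt with hx | hx
      · refine ⟨x + 1/b^2, ?_⟩
        have h1 : x + 1/b^2 < 0 := by
          rw [abs_of_neg hx] at h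
          have : 1/b^2 < -x := by rw [div_lt_iff₀ hc]; nlinarith
          linarith
        rw [abs_of_neg h1, abs_mul, abs_of_pos hc, abs_of_neg hx]
        field_simp
        ring
      · refine ⟨x - 1/b^2, ?_⟩
        have h1 : 0 < x - 1/b^2 := by
          rw [abs_of_pos hx] at h
          have : 1/b^2 < x := by rw [div_lt_iff₀ hc]; nlinarith
          linarith
        rw [abs_of_pos h1, abs_mul, abs_of_pos hc, abs_of_pos hx]
        field_simp
        ring

/-- If `BᵀB` is diagonal, the generalized Huber function is separable:
a sum of scalar scaled Huber functions. -/
theorem genHuber_separable_of_diagonal {M N : ℕ} (B : Matrix (Fin M) (Fin N) ℝ)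
    (α : Fin N → ℝ) (hBB : Bᵀ * B = Matrix.diagonal (fun n => (α n) ^ 2)) :
    ∀ x : Fin N → ℝ, genHuber B x = ∑ n, scaledHuber (α n) (x n) := by
  intro x
  have hnorm : ∀ u : Fin N → ℝ, norm2sq (B.mulVec u) = ∑ n, (α n)^2 * (u n)^2 := by
    intro u
    have : norm2sq (B.mulVec u) = B.mulVec u ⬝ᵥ B.mulVec u := by
      simp [norm2sq, dotProduct, sq]
    rw [this, show B.mulVec u ⬝ᵥ B.mulVec u = u ⬝ᵥ (Bᵀ * B).mulVec u by
      conv_rhs => rw [← Matrix.mulVec_mulVec, Matrix.dotProduct_mulVec,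
        Matrix.vecMul_transpose]]
    rw [hBB]
    simp [dotProduct, Matrix.mulVec_diagonal, sq]
    exact Finset.sum_congr rfl (fun n _ => by ring)
  have hobj : ∀ v : Fin N → ℝ,
      norm1 v + (1 / 2) * norm2sq (B.mulVec (x - v))
        = ∑ n, (|v n| + (1/2) * (α n)^2 * (x n - v n)^2) := by
    intro v
    rw [hnorm, norm1, Finset.mul_sum, ← Finset.sum_add_distrib]
    exact Finset.sum_congr rfl (fun n _ => by simp [Pi.sub_apply]; ring)
  unfold genHuber
  simp_rw [hobj]
  apply le_antisymm
  · choose w hw using fun n => scalar_attain (α n) (x n)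
    have : ∑ n, (|w n| + (1/2) * (α n)^2 * (x n - w n)^2) = ∑ n, scaledHuber (α n) (x n) :=
      Finset.sum_congr rfl (fun n _ => hw n)
    exact this ▸ ciInf_le ⟨∑ n, scaledHuber (α n) (x n), by
      rintro y ⟨v, rfl⟩
      exact Finset.sum_le_sum (fun n _ => scalar_lb (α n) (x n) (v n))⟩ w
  · apply le_ciInf
    intro v
    exact Finset.sum_le_sum (fun n _ => scalar_lb (α n) (x n) (v n))
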